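/- Posterior guilt probability with frequency uncertainty: in the uncertain-frequency island model, P(C=s | S=s, Γ_C=1, Γ_s=1) = 1/(1 + N(p + σ²/p)) = 1/(1+Np'), where p' = E[W | Γ_C=1] = (p² + σ²)/p. In particular uncertainty about the frequency (σ² > 0) strictly decreases the posterior probability of guilt relative to using p, provided N ≥ 1. -/

import Mathlib

open MeasureTheory ProbabilityTheory Finset
open scoped ENNReal

/-!
Split the evidence `E = {S = s, Γ_C, Γ_s}` according to the culprit `C = x`. Independence factors
`μ (E ∩ {C = x})` as `μ {C = x} * μ {S = s} * μ (Γ_x ∧ Γ_s)`, and since the traits are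
i.i.d. Bernoulli(`W`) given `W`, the last factor is `E[W] = p` for `x = s` and
`E[W²] = p² + σ²` for each of the `N` other `x`. With the uniform prior, Bayes' formula leaves
`p / (p + N (p² + σ²))`.
-/

theorem sum_piFinset_prod_eq_pow {X : Type*} [Fintype X] [DecidableEq X] (T : Finset X)
    (w : Bool → ℝ≥0∞) (hw : w true + w false = 1) :
    ∑ f ∈ Fintype.piFinset (fun x => if x ∈ T then {true} else univ), ∏ x, w (f x)
      = w true ^ #T := by
  rw [← prod_univ_sum]
  calc ∏ x, ∑ b ∈ (if x ∈ T then {true} else univ), w b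
      = ∏ x, if x ∈ T then w true else 1 :=
        prod_congr rfl fun x _ => by split_ifs <;> simp [hw]
    _ = w true ^ #T := by rw [prod_ite_mem, univ_inter, prod_const]

theorem sum_card_pair_eq {X M : Type*} [Fintype X] [DecidableEq X] [AddCommMonoid M]
    (g : ℕ → M) (s : X) :
    ∑ x, g #{x, s} = g 1 + (Fintype.card X - 1) • g 2 := by
  have hpair : ∀ x ∈ univ.erase s, g #{x, s} = g 2 := fun x hx => by
    rw [card_pair (ne_of_mem_erase hx)]
  rw [← add_sum_erase _ _ (mem_univ s), sum_congr rfl hpair, sum_const,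
    card_erase_of_mem (mem_univ s), card_univ]
  simp

theorem measure_eq_sum_inter_setOf_eq {Ω X : Type*} [MeasurableSpace Ω] [Fintype X]
    [MeasurableSpace X] [MeasurableSingletonClass X] (μ : Measure Ω) {C : Ω → X}
    (hC : Measurable C) (E : Set Ω) :
    μ E = ∑ x, μ (E ∩ {ω | C ω = x}) := by
  have h := sum_measure_preimage_singleton (μ := μ.restrict E) univ
    fun x _ => hC (measurableSet_singleton x)
  simp only [coe_univ, Set.preimage_univ, Measure.restrict_apply_univ] at h
  rw [← h]
  exact sum_congr rfl fun x _ =>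
    (Measure.restrict_apply (hC (measurableSet_singleton x))).trans (by rw [Set.inter_comm]; rfl)

theorem cond_setOf_eq_eq_div_sum {Ω X : Type*} [MeasurableSpace Ω] [Fintype X]
    [MeasurableSpace X] [MeasurableSingletonClass X] {μ : Measure Ω} {C : Ω → X}
    (hC : Measurable C) {E : Set Ω} {c : ℝ≥0∞} {q : X → ℝ≥0∞}
    (hq : ∀ x, μ (E ∩ {ω | C ω = x}) = c * q x) (hc : c ≠ ∞) (hE : μ E ≠ 0) (s : X) :
    μ[|E] {ω | C ω = s} = q s / ∑ x, q x := by
  rw [cond_apply' (t := {ω | C ω = s}) (hC (measurableSet_singleton s))]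
  rw [measure_eq_sum_inter_setOf_eq μ hC E] at hE ⊢
  simp only [hq, ← mul_sum] at hE ⊢
  rw [← ENNReal.div_eq_inv_mul, ENNReal.mul_div_mul_left _ _ (left_ne_zero_of_mul hE) hc]

theorem ProbabilityTheory.IndepFun.measure_inter_preimage_eq_mul_mul {Ω α β γ : Type*}
    [MeasurableSpace Ω] [MeasurableSpace α] [MeasurableSpace β] [MeasurableSpace γ]
    {μ : Measure Ω} {C : Ω → α} {S : Ω → β} {V : Ω → γ} (hCS : IndepFun C S μ)
    (hV : IndepFun (fun ω => (C ω, S ω)) V μ) {A : Set α} {B : Set β} {D : Set γ}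
    (hA : MeasurableSet A) (hB : MeasurableSet B) (hD : MeasurableSet D) :
    μ (C ⁻¹' A ∩ S ⁻¹' B ∩ V ⁻¹' D) = μ (C ⁻¹' A) * μ (S ⁻¹' B) * μ (V ⁻¹' D) := by
  rw [← hCS.measure_inter_preimage_eq_mul _ _ hA hB]
  exact hV.measure_inter_preimage_eq_mul _ _ (hA.prod hB) hD

theorem measure_evidence_inter_culprit_eq {Ω X V : Type*} [MeasurableSpace Ω] [Fintype X]
    [DecidableEq X] [MeasurableSpace X] [MeasurableSingletonClass X] [MeasurableSpace V]
    {μ : Measure Ω} {C S : Ω → X} {Γ : X → Ω → Bool} {W : Ω → V} (hCS : IndepFun C S μ)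
    (hind : IndepFun (fun ω => (C ω, S ω)) (fun ω => (W ω, fun x => Γ x ω)) μ) (s x : X) :
    μ ({ω | S ω = s} ∩ {ω | Γ (C ω) ω = true} ∩ {ω | Γ s ω = true} ∩ {ω | C ω = x})
      = μ {ω | C ω = x} * μ {ω | S ω = s} * μ {ω | ∀ y ∈ ({x, s} : Finset X), Γ y ω = true} := by
  have hevent : {ω | S ω = s} ∩ {ω | Γ (C ω) ω = true} ∩ {ω | Γ s ω = true} ∩ {ω | C ω = x}
      = C ⁻¹' {x} ∩ S ⁻¹' {s} ∩
        (fun ω y => Γ y ω) ⁻¹' {g | ∀ y ∈ ({x, s} : Finset X), g y = true} := by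
    ext ω
    simp only [Set.mem_inter_iff, Set.mem_preimage, Set.mem_singleton_iff,
      Set.mem_ofPred_eq, mem_insert, mem_singleton, forall_eq_or_imp, forall_eq]
    constructor
    · rintro ⟨⟨⟨hSs, hΓC⟩, hΓs⟩, rfl⟩
      exact ⟨⟨rfl, hSs⟩, hΓC, hΓs⟩
    · rintro ⟨⟨rfl, hSs⟩, hΓC, hΓs⟩
      exact ⟨⟨⟨hSs, hΓC⟩, hΓs⟩, rfl⟩
  rw [hevent]
  exact hCS.measure_inter_preimage_eq_mul_mul (hind.comp measurable_id measurable_snd)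
    (measurableSet_singleton x) (measurableSet_singleton s) (Set.toFinite _).measurableSet

theorem integral_sq_eq_sq_add_integral_sub_sq {Ω : Type*} [MeasurableSpace Ω]
    {μ : Measure Ω} [IsProbabilityMeasure μ] {X : Ω → ℝ} (hX : MemLp X 2 μ) :
    ∫ ω, X ω ^ 2 ∂μ = (∫ ω, X ω ∂μ) ^ 2 + ∫ ω, (X ω - ∫ ω, X ω ∂μ) ^ 2 ∂μ := by
  have h := (variance_eq_integral hX.aemeasurable).symm.trans (variance_eq_sub hX)
  simp only [Pi.pow_apply] at h
  linarith

theorem aemeasurable_of_integrable_id_mul {χ : ℝ → ℝ}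
    (h : Integrable (fun t => t * χ t)) : AEMeasurable χ := by
  refine (measurable_inv.aemeasurable.mul h.aemeasurable).congr ?_
  filter_upwards [Measure.ae_ne volume 0] with t ht
  exact inv_mul_cancel_left₀ ht (χ t)

theorem integral_withDensity_ofReal {α : Type*} [MeasurableSpace α] {μ : Measure α}
    {χ : α → ℝ} (hχ0 : ∀ t, 0 ≤ χ t) (hχ : AEMeasurable χ μ) (g : α → ℝ) :
    ∫ t, g t ∂(μ.withDensity fun t => ENNReal.ofReal (χ t)) = ∫ t, g t * χ t ∂μ := by
  rw [integral_withDensity_eq_integral_toReal_smul₀ hχ.ennreal_ofReal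
    (.of_forall fun _ => ENNReal.ofReal_lt_top)]
  simp [ENNReal.toReal_ofReal (hχ0 _), mul_comm]

theorem ae_mem_of_withDensity_eq_zero_off {α : Type*} [MeasurableSpace α] {μ : Measure α}
    {f : α → ℝ≥0∞} (hf : AEMeasurable f μ) {s : Set α} (hs : ∀ t ∉ s, f t = 0) :
    ∀ᵐ t ∂μ.withDensity f, t ∈ s :=
  (ae_withDensity_iff' hf).2 (.of_forall fun t ht => by_contra fun h => ht (hs t h))

section UnitInterval

variable {ν : Measure ℝ} (hν : ∀ᵐ t ∂ν, t ∈ Set.Icc (0 : ℝ) 1)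
include hν

theorem memLp_id_of_ae_mem_Icc [IsFiniteMeasure ν] (k : ℝ≥0∞) : MemLp (fun t => t) k ν := by
  refine .of_bound (by fun_prop) 1 ?_
  filter_upwards [hν] with t ht
  rw [Real.norm_eq_abs, abs_le]
  exact ⟨by linarith [ht.1], ht.2⟩

theorem lintegral_ofReal_pow_of_ae_mem_Icc [IsFiniteMeasure ν] (k : ℕ) :
    ∫⁻ t, ENNReal.ofReal t ^ k ∂ν = ENNReal.ofReal (∫ t, t ^ k ∂ν) := by
  have hint : Integrable (fun t : ℝ => t ^ k) ν := by
    refine .of_bound (by fun_prop) 1 ?_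
    filter_upwards [hν] with t ht
    rw [Real.norm_eq_abs, abs_of_nonneg (pow_nonneg ht.1 k)]
    exact pow_le_one₀ ht.1 ht.2
  rw [ofReal_integral_eq_lintegral_ofReal hint
    (by filter_upwards [hν] with t ht using pow_nonneg ht.1 k)]
  refine lintegral_congr_ae ?_
  filter_upwards [hν] with t ht
  rw [ENNReal.ofReal_pow ht.1]

theorem measure_forall_mem_eq_lintegral_pow {Ω X : Type*} [MeasurableSpace Ω] [Fintype X]
    [DecidableEq X] {μ : Measure Ω} {Γ : X → Ω → Bool} (hΓ : ∀ x, Measurable (Γ x))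
    (hmodel : ∀ f : X → Bool, μ {ω | ∀ x, Γ x ω = f x}
      = ∫⁻ t, ∏ x, (if f x then ENNReal.ofReal t else ENNReal.ofReal (1 - t)) ∂ν)
    (T : Finset X) :
    μ {ω | ∀ x ∈ T, Γ x ω = true} = ∫⁻ t, ENNReal.ofReal t ^ #T ∂ν := by
  set G : Ω → X → Bool := fun ω x => Γ x ω
  set F := Fintype.piFinset fun x => if x ∈ T then {true} else univ
  have hG : Measurable G := measurable_pi_lambda _ hΓ
  have hevent : {ω | ∀ x ∈ T, Γ x ω = true} = G ⁻¹' F := by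
    ext ω
    simp only [F, G, Set.mem_ofPred_eq, Set.mem_preimage, mem_coe, Fintype.mem_piFinset]
    refine forall_congr' fun x => ?_
    split_ifs with hx <;> simp [hx]
  have hfiber : ∀ f, μ (G ⁻¹' {f})
      = ∫⁻ t, ∏ x, (if f x then ENNReal.ofReal t else ENNReal.ofReal (1 - t)) ∂ν := by
    intro f
    rw [← hmodel f]
    congr 1
    ext ω
    simp [G, funext_iff]
  have hweight : ∀ f : X → Bool, ∀ x, Measurable
      fun t : ℝ => if f x then ENNReal.ofReal t else ENNReal.ofReal (1 - t) := by
    intro f x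
    cases f x <;> simp only [Bool.false_eq_true, if_true, if_false] <;> fun_prop
  rw [hevent, ← sum_measure_preimage_singleton F fun f _ => hG (measurableSet_singleton f),
    sum_congr rfl fun f _ => hfiber f, ← lintegral_finsetSum' _ fun f _ =>
      (measurable_prod _ fun x _ => hweight f x).aemeasurable]
  refine lintegral_congr_ae ?_
  filter_upwards [hν] with t ht
  refine sum_piFinset_prod_eq_pow T (fun b => if b then _ else _) ?_
  show ENNReal.ofReal t + ENNReal.ofReal (1 - t) = 1
  rw [← ENNReal.ofReal_add ht.1 (by linarith [ht.2])]
  simp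

end UnitInterval

theorem ofReal_div_ofReal_add_mul_ofReal {p σ2 : ℝ} (hp : 0 < p) (hσ2 : 0 ≤ σ2) (N : ℕ) :
    ENNReal.ofReal p / (ENNReal.ofReal p + N * ENNReal.ofReal (p ^ 2 + σ2))
      = ENNReal.ofReal (1 / (1 + N * (p + σ2 / p))) := by
  have hden : 0 < p + N * (p ^ 2 + σ2) := by positivity
  rw [← ENNReal.ofReal_natCast, ← ENNReal.ofReal_mul (by positivity),
    ← ENNReal.ofReal_add hp.le (by positivity), ← ENNReal.ofReal_div_of_pos hden]
  congr 1
  field_simp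

theorem island_uncertain_frequency_posterior_general
    {Ω : Type*} [MeasurableSpace Ω] (μ : Measure Ω) [IsProbabilityMeasure μ]
    {X : Type*} [Fintype X] [MeasurableSpace X] [MeasurableSingletonClass X]
    (N : ℕ) (hX : Fintype.card X = N + 1)
    (C S : Ω → X) (hC : Measurable C)
    (hCunif : ∀ x : X, μ {ω | C ω = x} = 1 / (N + 1))
    (hCS : IndepFun C S μ)
    (Γ : X → Ω → Bool) (hΓ : ∀ x, Measurable (Γ x))
    (W : Ω → ℝ)
    (χ : ℝ → ℝ) (hχ0 : ∀ t, 0 ≤ χ t) (hχsupp : ∀ t, t ∉ Set.Icc (0:ℝ) 1 → χ t = 0)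
    (hmap : μ.map W = MeasureTheory.volume.withDensity (fun t => ENNReal.ofReal (χ t)))
    (p : ℝ) (hp0 : 0 < p) (hp : ∫ t, t * χ t = p)
    (σ2 : ℝ) (hσ2 : ∫ t, (t - p) ^ 2 * χ t = σ2)
    -- `(C,S)` is independent of `(W, (Γ_x)_x)`:
    (hind : IndepFun (fun ω => (C ω, S ω)) (fun ω => (W ω, fun x => Γ x ω)) μ)
    -- conditionally on `W = t`, the `Γ_x` are i.i.d. Bernoulli(`t`):
    (hmodel : ∀ (f : X → Bool) (B : Set ℝ), MeasurableSet B →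
      μ ({ω | ∀ x, Γ x ω = f x} ∩ W ⁻¹' B)
        = ∫⁻ t in B,
            (∏ x : X, if f x then ENNReal.ofReal t else ENNReal.ofReal (1 - t))
          ∂(μ.map W))
    (s : X)
    (hpos : μ ({ω | S ω = s} ∩ {ω | Γ (C ω) ω = true} ∩ {ω | Γ s ω = true}) ≠ 0) :
    μ[|{ω | S ω = s} ∩ {ω | Γ (C ω) ω = true} ∩ {ω | Γ s ω = true}] {ω | C ω = s}
        = ENNReal.ofReal (1 / (1 + N * (p + σ2 / p))) ∧
    (0 < σ2 → 1 ≤ N →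
      μ[|{ω | S ω = s} ∩ {ω | Γ (C ω) ω = true} ∩ {ω | Γ s ω = true}] {ω | C ω = s}
        < ENNReal.ofReal (1 / (1 + N * p))) := by
  classical
  set ν := μ.map W
  have hχ : AEMeasurable χ :=
    aemeasurable_of_integrable_id_mul (.of_integral_ne_zero (hp ▸ hp0.ne'))
  have hν : ∀ᵐ t ∂ν, t ∈ Set.Icc (0 : ℝ) 1 :=
    hmap ▸ ae_mem_of_withDensity_eq_zero_off hχ.ennreal_ofReal fun t ht => by simp [hχsupp t ht]
  have hΓT := measure_forall_mem_eq_lintegral_pow hν hΓ fun f => by simpa using hmodel f _ .univ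
  -- `T = ∅` gives `ν univ = μ univ = 1`
  have : IsProbabilityMeasure ν := ⟨by simpa using (hΓT ∅).symm⟩
  have hmean : ∫ t, t ∂ν = p := by rw [hmap, integral_withDensity_ofReal hχ0 hχ]; exact hp
  have hsq : ∫ t, t ^ 2 ∂ν = p ^ 2 + σ2 := by
    rw [integral_sq_eq_sq_add_integral_sub_sq (memLp_id_of_ae_mem_Icc hν 2), hmean, hmap,
      integral_withDensity_ofReal hχ0 hχ, hσ2]
  have hσ2nn : 0 ≤ σ2 := hσ2 ▸ integral_nonneg fun t => mul_nonneg (sq_nonneg _) (hχ0 t)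
  have hjoint : ∀ x, μ ({ω | S ω = s} ∩ {ω | Γ (C ω) ω = true} ∩ {ω | Γ s ω = true} ∩
      {ω | C ω = x}) = 1 / (N + 1) * μ {ω | S ω = s} * ENNReal.ofReal (∫ t, t ^ #{x, s} ∂ν) :=
    fun x => by rw [measure_evidence_inter_culprit_eq hCS hind, hCunif, hΓT,
      lintegral_ofReal_pow_of_ae_mem_Icc hν]
  have hpost := cond_setOf_eq_eq_div_sum hC hjoint
    (ENNReal.mul_ne_top (by simp) (measure_ne_top _ _)) hpos s
  rw [sum_card_pair_eq (fun k => ENNReal.ofReal (∫ t, t ^ k ∂ν)), hX] at hpost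
  simp only [pair_eq_singleton, card_singleton, pow_one, hmean, hsq, add_tsub_cancel_right,
    nsmul_eq_mul, ofReal_div_ofReal_add_mul_ofReal hp0 hσ2nn] at hpost
  refine ⟨hpost, fun hσ2pos hN => hpost ▸ (ENNReal.ofReal_lt_ofReal_iff (by positivity)).2 ?_⟩
  have hN' : (0 : ℝ) < N := by exact_mod_cast hN
  exact one_div_lt_one_div_of_lt (by positivity) (by gcongr; linarith [div_pos hσ2pos hp0])

/-- Posterior guilt probability with frequency uncertainty:
`P(C=s | S=s, I, E) = 1/(1 + N(p + σ²/p))`, and uncertainty (`σ² > 0`) strictly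
decreases the posterior probability of guilt relative to using `p`, provided `N ≥ 1`. -/
theorem island_uncertain_frequency_posterior
    {Ω : Type*} [MeasurableSpace Ω] (μ : Measure Ω) [IsProbabilityMeasure μ]
    {X : Type*} [Fintype X] [MeasurableSpace X] [MeasurableSingletonClass X]
    (N : ℕ) (hX : Fintype.card X = N + 1)
    (C S : Ω → X) (hC : Measurable C) (hS : Measurable S)
    (hCunif : ∀ x : X, μ {ω | C ω = x} = 1 / (N + 1))
    (hCS : IndepFun C S μ)
    (Γ : X → Ω → Bool) (hΓ : ∀ x, Measurable (Γ x))
    (W : Ω → ℝ) (hW : Measurable W)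
    (χ : ℝ → ℝ) (hχ0 : ∀ t, 0 ≤ χ t) (hχsupp : ∀ t, t ∉ Set.Icc (0:ℝ) 1 → χ t = 0)
    (hmap : μ.map W = MeasureTheory.volume.withDensity (fun t => ENNReal.ofReal (χ t)))
    (p : ℝ) (hp0 : 0 < p) (hp : ∫ t, t * χ t = p)
    (σ2 : ℝ) (hσ2 : ∫ t, (t - p) ^ 2 * χ t = σ2)
    -- `(C,S)` is independent of `(W, (Γ_x)_x)`:
    (hind : IndepFun (fun ω => (C ω, S ω)) (fun ω => (W ω, fun x => Γ x ω)) μ)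
    -- conditionally on `W = t`, the `Γ_x` are i.i.d. Bernoulli(`t`):
    (hmodel : ∀ (f : X → Bool) (B : Set ℝ), MeasurableSet B →
      μ ({ω | ∀ x, Γ x ω = f x} ∩ W ⁻¹' B)
        = ∫⁻ t in B,
            (∏ x : X, if f x then ENNReal.ofReal t else ENNReal.ofReal (1 - t))
          ∂(μ.map W))
    (s : X)
    (hpos : μ ({ω | S ω = s} ∩ {ω | Γ (C ω) ω = true} ∩ {ω | Γ s ω = true}) ≠ 0) :
    μ[|{ω | S ω = s} ∩ {ω | Γ (C ω) ω = true} ∩ {ω | Γ s ω = true}] {ω | C ω = s}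
        = ENNReal.ofReal (1 / (1 + N * (p + σ2 / p))) ∧
    (0 < σ2 → 1 ≤ N →
      μ[|{ω | S ω = s} ∩ {ω | Γ (C ω) ω = true} ∩ {ω | Γ s ω = true}] {ω | C ω = s}
        < ENNReal.ofReal (1 / (1 + N * p))) :=
  island_uncertain_frequency_posterior_general μ N hX C S hC hCunif hCS Γ hΓ W χ hχ0 hχsupp hmap p
    hp0 hp σ2 hσ2 hind hmodel s hpos
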